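/- arXiv:2603.02126 — 4 statements merged into one kernel-verified Lean document; each statement's English description precedes it below -/
import Mathlib

section
/- Let 1 < p < ∞, 0 < ε < 1, and A invertible. If w ∈ A_{A,p} and w^{1-p'} belongs to the reverse Hölder class RH_s with s = (p-1)/(p-ε-1), then w ∈ A_{A,p-ε}. Here p' = p/(p-1). -/
open MeasureTheory

/-- An axis-parallel cube in ℝⁿ with center `c` and half side length `r`. -/
def cube {n : ℕ} (c : Fin n → ℝ) (r : ℝ) : Set (Fin n → ℝ) :=
  {y | ∀ i, |y i - c i| ≤ r}

/-- if `w ∈ A_{A,p}` and `w^{1-p'} ∈ RH_s` with `s = (p-1)/(p-ε-1)`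
(here `p' = p/(p-1)`, so `w^{1-p'} = w^{-1/(p-1)}`), then `w ∈ A_{A,p-ε}`. -/
theorem stmt6 {n : ℕ} (p ε : ℝ) (hp : 1 < p) (hε0 : 0 < ε) (hε1 : ε < 1)
    (hεp : ε + 1 < p)
    (A : Matrix (Fin n) (Fin n) ℝ) (hA : IsUnit A.det)
    (w : (Fin n → ℝ) → ℝ) (hw : ∀ x, 0 < w x)
    (hloc : LocallyIntegrable w volume)
    (hAAp : ∃ C : ℝ, ∀ (c : Fin n → ℝ) (r : ℝ), 0 < r →
      ((volume (cube c r)).toReal⁻¹ * ∫ x in cube c r, w (A.mulVec x)) *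
      ((volume (cube c r)).toReal⁻¹ * ∫ x in cube c r, (w x) ^ (-(1 / (p - 1)))) ^ (p - 1) ≤ C)
    (hRH : ∃ C : ℝ, ∀ (c : Fin n → ℝ) (r : ℝ), 0 < r →
      ((volume (cube c r)).toReal⁻¹ *
          ∫ x in cube c r, ((w x) ^ (1 - p / (p - 1))) ^ ((p - 1) / (p - ε - 1)))
            ^ ((p - ε - 1) / (p - 1)) ≤
        C * ((volume (cube c r)).toReal⁻¹ * ∫ x in cube c r, (w x) ^ (1 - p / (p - 1)))) :
    ∃ C : ℝ, ∀ (c : Fin n → ℝ) (r : ℝ), 0 < r →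
      ((volume (cube c r)).toReal⁻¹ * ∫ x in cube c r, w (A.mulVec x)) *
      ((volume (cube c r)).toReal⁻¹ * ∫ x in cube c r, (w x) ^ (-(1 / (p - ε - 1))))
          ^ (p - ε - 1) ≤ C := by

  obtain ⟨C1, hC1⟩ := hAAp
  obtain ⟨C2, hC2⟩ := hRH
  have hq : 0 < p - ε - 1 := by linarith
  have hp1 : 0 < p - 1 := by linarith
  refine ⟨(max C2 0) ^ (p - 1) * C1, fun c r hr => ?_⟩
  set V : ℝ := (volume (cube c r)).toReal⁻¹ with hV
  have hV0 : 0 ≤ V := by positivity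
  set X : ℝ := V * ∫ x in cube c r, (w x) ^ (-(1 / (p - ε - 1))) with hXdef
  set Y : ℝ := V * ∫ x in cube c r, (w x) ^ (-(1 / (p - 1))) with hYdef
  set Z : ℝ := V * ∫ x in cube c r, w (A.mulVec x) with hZdef
  have hX : 0 ≤ X := mul_nonneg hV0 (integral_nonneg fun x => Real.rpow_nonneg (hw x).le _)
  have hY : 0 ≤ Y := mul_nonneg hV0 (integral_nonneg fun x => Real.rpow_nonneg (hw x).le _)
  have hZ : 0 ≤ Z := mul_nonneg hV0 (integral_nonneg fun x => (hw _).le)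
  have he1 : (1 : ℝ) - p / (p - 1) = -(1 / (p - 1)) := by
    field_simp
    ring
  have he2 : ∀ x, ((w x) ^ ((1:ℝ) - p / (p - 1))) ^ ((p - 1) / (p - ε - 1))
      = (w x) ^ (-(1 / (p - ε - 1))) := by
    intro x
    rw [← Real.rpow_mul (hw x).le, he1]
    congr 1
    field_simp
  have hRH' : X ^ ((p - ε - 1) / (p - 1)) ≤ max C2 0 * Y := by
    have h := hC2 c r hr
    rw [show (∫ x in cube c r, ((w x) ^ ((1:ℝ) - p / (p - 1))) ^ ((p - 1) / (p - ε - 1)))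
        = ∫ x in cube c r, (w x) ^ (-(1 / (p - ε - 1))) from integral_congr_ae
        (Filter.Eventually.of_forall fun x => he2 x)] at h
    rw [show (∫ x in cube c r, (w x) ^ ((1:ℝ) - p / (p - 1)))
        = ∫ x in cube c r, (w x) ^ (-(1 / (p - 1))) from integral_congr_ae
        (Filter.Eventually.of_forall fun x => by rw [he1])] at h
    calc X ^ ((p - ε - 1) / (p - 1)) ≤ C2 * Y := h
      _ ≤ max C2 0 * Y := mul_le_mul_of_nonneg_right (le_max_left _ _) hY
  have ha : (0:ℝ) < (p - ε - 1) / (p - 1) := div_pos hq hp1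
  have hXle : X ≤ (max C2 0 * Y) ^ ((p - 1) / (p - ε - 1)) := by
    have : (X ^ ((p - ε - 1) / (p - 1))) ^ ((p - 1) / (p - ε - 1)) = X := by
      rw [← Real.rpow_mul hX]
      rw [show (p - ε - 1) / (p - 1) * ((p - 1) / (p - ε - 1)) = 1 by
        field_simp]
      exact Real.rpow_one X
    rw [← this]
    exact Real.rpow_le_rpow (Real.rpow_nonneg hX _) hRH' (le_of_lt (div_pos hp1 hq))
  have hXq : X ^ (p - ε - 1) ≤ (max C2 0) ^ (p - 1) * Y ^ (p - 1) := by
    have h1 : X ^ (p - ε - 1) ≤ ((max C2 0 * Y) ^ ((p - 1) / (p - ε - 1))) ^ (p - ε - 1) :=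
      Real.rpow_le_rpow hX hXle hq.le
    have h2 : ((max C2 0 * Y) ^ ((p - 1) / (p - ε - 1))) ^ (p - ε - 1)
        = (max C2 0) ^ (p - 1) * Y ^ (p - 1) := by
      rw [← Real.rpow_mul (mul_nonneg (le_max_right C2 0) hY)]
      rw [show (p - 1) / (p - ε - 1) * (p - ε - 1) = p - 1 by field_simp]
      exact Real.mul_rpow (le_max_right C2 0) hY
    exact h1.trans_eq h2
  calc Z * X ^ (p - ε - 1) ≤ Z * ((max C2 0) ^ (p - 1) * Y ^ (p - 1)) :=
        mul_le_mul_of_nonneg_left hXq hZ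
    _ = (max C2 0) ^ (p - 1) * (Z * Y ^ (p - 1)) := by ring
    _ ≤ (max C2 0) ^ (p - 1) * C1 :=
        mul_le_mul_of_nonneg_left (hC1 c r hr) (Real.rpow_nonneg (le_max_right C2 0) _)
end

section
/- Let n = 1, A the 1×1 matrix (2), c_k = 2^{2k-1}, a_k = 3·2^{2k-1}, w_k(x) = |x - c_k|^{-1/2}, and w = w_1·χ_{(-∞,a_1)} + Σ_{k≥2} w_k·χ_{(a_{k-1},a_k)}. Then sup over intervals J of (1/|J|)∫_J w(2x) dx · (1/|J|)∫_J w(x)^{-1} dx = ∞; in particular w ∉ A_{A,2}. -/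
open MeasureTheory

/-- `c k = 2^{2k-1}`. -/
noncomputable def cc (k : ℕ) : ℝ := 2 ^ (2 * k - 1)

/-- `a k = 3 · 2^{2k-1}`. -/
noncomputable def aa (k : ℕ) : ℝ := 3 * 2 ^ (2 * k - 1)

/-- The weight `w = w₁ χ_{(-∞,a₁)} + Σ_{k≥2} w_k χ_{(a_{k-1},a_k)}` with
`w_k(x) = |x - c_k|^{-1/2}`. -/
noncomputable def w (x : ℝ) : ℝ :=
  (Set.Iio (aa 1)).indicator (fun y => |y - cc 1| ^ (-(1 : ℝ) / 2)) x +
    ∑' k : ℕ, (Set.Ioo (aa (k + 1)) (aa (k + 2))).indicator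
      (fun y => |y - cc (k + 2)| ^ (-(1 : ℝ) / 2)) x

lemma aa_strictMono : StrictMono aa := by
  intro j m h
  unfold aa
  have : 2 * j - 1 < 2 * m - 1 := by omega
  have h2 : (2:ℝ) ^ (2*j-1) < 2 ^ (2*m-1) := by
    apply pow_lt_pow_right₀ (by norm_num) this
  linarith

lemma aa_mono : Monotone aa := aa_strictMono.monotone

lemma w_eq (m : ℕ) (x : ℝ) (hx : x ∈ Set.Ioo (aa (m+1)) (aa (m+2))) :
    w x = |x - cc (m+2)| ^ (-(1:ℝ)/2) := by
  unfold w
  rw [Set.indicator_of_notMem, tsum_eq_single m, Set.indicator_of_mem hx, zero_add]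
  · intro j hj
    apply Set.indicator_of_notMem
    intro hxj
    rcases lt_or_gt_of_ne hj with h | h
    · exact absurd hxj.2 (not_lt.2 (le_trans (aa_mono (by omega)) hx.1.le))
    · exact absurd hx.2 (not_lt.2 (le_trans (aa_mono (by omega)) hxj.1.le))
  · intro hxi
    exact absurd hxi (not_lt.2 (le_trans (aa_mono (by omega)) hx.1.le))

/-- for `A = (2)`, the `A_{A,2}` supremum of
`(1/|J|)∫_J w(2x) dx · (1/|J|)∫_J w(x)⁻¹ dx` over bounded intervals `J` is infinite;
in particular `w ∉ A_{A,2}`. -/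
theorem stmt8 :
    ∀ C : ℝ, ∃ s t : ℝ, s < t ∧
      C < ((t - s)⁻¹ * ∫ x in s..t, w (2 * x)) * ((t - s)⁻¹ * ∫ x in s..t, (w x)⁻¹) := by
  intro C
  obtain ⟨k, hk⟩ : ∃ k : ℕ, C < 2 ^ k := pow_unbounded_of_one_lt C one_lt_two
  set Y : ℝ := 2 ^ (2 * k + 3) with hYdef
  have hY : (1:ℝ) ≤ Y := one_le_pow₀ (by norm_num)
  set s : ℝ := 2 * Y + 1/8 with hsdef
  set t : ℝ := 2 * Y + 1/4 with htdef
  have hst : s < t := by rw [hsdef, htdef]; linarith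
  have hts : t - s = 1/8 := by rw [hsdef, htdef]; ring
  have huIcc : Set.uIcc s t = Set.Icc s t := Set.uIcc_of_le hst.le
  have hcc2 : cc (k + 2) = Y := by
    unfold cc; rw [hYdef]; norm_num [show 2*(k+2)-1 = 2*k+3 from by omega]
  have hcc3 : cc (k + 3) = 4 * Y := by
    unfold cc; rw [hYdef, show 2*(k+3)-1 = (2*k+3)+2 from by omega, pow_add]; ring
  have haa1 : aa (k + 1) = (3/4) * Y := by
    unfold aa; rw [hYdef, show 2*k+3 = (2*(k+1)-1)+2 from by omega, pow_add]; ring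
  have haa2 : aa (k + 2) = 3 * Y := by
    unfold aa; rw [hYdef]; norm_num [show 2*(k+2)-1 = 2*k+3 from by omega]
  have haa3 : aa (k + 3) = 12 * Y := by
    unfold aa; rw [hYdef, show 2*(k+3)-1 = (2*k+3)+2 from by omega, pow_add]; ring
  -- first integrand
  have hw2 : ∀ x ∈ Set.Icc s t, w (2*x) = |2*x - 4*Y| ^ (-(1:ℝ)/2) := by
    intro x hx
    obtain ⟨hx1, hx2⟩ := hx
    rw [hsdef] at hx1; rw [htdef] at hx2
    rw [w_eq (k+1) (2*x) ⟨by rw [show k+1+1 = k+2 from rfl, haa2]; linarith,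
      by rw [show k+1+2 = k+3 from rfl, haa3]; linarith⟩, hcc3]
  have hwin : ∀ x ∈ Set.Icc s t, (w x)⁻¹ = |x - Y| ^ ((1:ℝ)/2) := by
    intro x hx
    obtain ⟨hx1, hx2⟩ := hx
    rw [hsdef] at hx1; rw [htdef] at hx2
    rw [w_eq k x ⟨by rw [haa1]; linarith, by rw [haa2]; linarith⟩, hcc2,
      show (-(1:ℝ)/2) = -((1:ℝ)/2) from by norm_num,
      Real.rpow_neg (abs_nonneg _), inv_inv]
  -- integrals congruence
  have hint1 : ∫ x in s..t, w (2*x) = ∫ x in s..t, |2*x - 4*Y| ^ (-(1:ℝ)/2) :=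
    intervalIntegral.integral_congr (by rw [huIcc]; exact fun x hx => hw2 x hx)
  have hint2 : ∫ x in s..t, (w x)⁻¹ = ∫ x in s..t, |x - Y| ^ ((1:ℝ)/2) :=
    intervalIntegral.integral_congr (by rw [huIcc]; exact fun x hx => hwin x hx)
  -- continuity / integrability
  have hcont1 : ContinuousOn (fun x => |2*x - 4*Y| ^ (-(1:ℝ)/2)) (Set.Icc s t) := by
    apply ContinuousOn.rpow_const
    · exact ((continuous_const.mul continuous_id).sub continuous_const).abs.continuousOn
    · intro x hx
      left
      obtain ⟨hx1, _⟩ := hx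
      rw [hsdef] at hx1
      have : (0:ℝ) < 2*x - 4*Y := by linarith
      simp [abs_ne_zero]; linarith
  have hcont2 : ContinuousOn (fun x => |x - Y| ^ ((1:ℝ)/2)) (Set.Icc s t) := by
    apply ContinuousOn.rpow_const
    · exact (continuous_id.sub continuous_const).abs.continuousOn
    · intro x _; right; norm_num
  have hi1 : IntervalIntegrable (fun x => |2*x - 4*Y| ^ (-(1:ℝ)/2)) volume s t :=
    (huIcc ▸ hcont1).intervalIntegrable
  have hi2 : IntervalIntegrable (fun x => |x - Y| ^ ((1:ℝ)/2)) volume s t :=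
    (huIcc ▸ hcont2).intervalIntegrable
  -- lower bounds
  have hlb1 : (1:ℝ)/8 ≤ ∫ x in s..t, |2*x - 4*Y| ^ (-(1:ℝ)/2) := by
    have h1 : ∫ x in s..t, (1:ℝ) = 1/8 := by simp [hts]
    rw [← h1]
    apply intervalIntegral.integral_mono_on hst.le intervalIntegrable_const hi1
    intro x hx
    obtain ⟨hx1, hx2⟩ := hx
    rw [hsdef] at hx1; rw [htdef] at hx2
    apply Real.one_le_rpow_of_pos_of_le_one_of_nonpos
    · rw [abs_pos]; intro h; linarith [abs_nonneg (2*x - 4*Y)]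
    · rw [abs_le]; constructor <;> linarith
    · norm_num
  have hpow : ((2:ℝ)^(k+1))^2 ≤ Y := by
    rw [← pow_mul, hYdef]
    apply pow_le_pow_right₀ (by norm_num) (by omega)
  have hlb2 : ((1:ℝ)/8) * 2^(k+1) ≤ ∫ x in s..t, |x - Y| ^ ((1:ℝ)/2) := by
    have h1 : ∫ x in s..t, ((2:ℝ)^(k+1)) = (1/8) * 2^(k+1) := by simp [hts]
    rw [← h1]
    apply intervalIntegral.integral_mono_on hst.le intervalIntegrable_const hi2
    intro x hx
    obtain ⟨hx1, _⟩ := hx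
    rw [hsdef] at hx1
    calc (2:ℝ)^(k+1) = (((2:ℝ)^(k+1))^2) ^ ((1:ℝ)/2) := by
          rw [← Real.rpow_natCast ((2:ℝ)^(k+1)) 2, ← Real.rpow_mul (by positivity)]
          norm_num
      _ ≤ |x - Y| ^ ((1:ℝ)/2) := by
          apply Real.rpow_le_rpow (by positivity) _ (by norm_num)
          exact le_trans (by linarith) (le_abs_self _)
  -- put it together
  refine ⟨s, t, hst, ?_⟩
  rw [hint1, hint2, hts]
  have hf1 : (1:ℝ) ≤ ((1:ℝ)/8)⁻¹ * ∫ x in s..t, |2*x - 4*Y| ^ (-(1:ℝ)/2) := by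
    rw [show ((1:ℝ)/8)⁻¹ = 8 from by norm_num]; linarith
  have hf2 : (2:ℝ)^(k+1) ≤ ((1:ℝ)/8)⁻¹ * ∫ x in s..t, |x - Y| ^ ((1:ℝ)/2) := by
    rw [show ((1:ℝ)/8)⁻¹ = 8 from by norm_num]; linarith
  have hC : C < (2:ℝ)^(k+1) := lt_of_lt_of_le hk (by
    apply pow_le_pow_right₀ (by norm_num) (by omega))
  nlinarith [pow_pos (show (0:ℝ) < 2 from by norm_num) (k+1)]
end

section
/- Let dμ = e^{|x|}dx on ℝ, 1 < p < ∞, w(x) = e^{(p-1)|x|}, and A = (1/2). For every interval R_h = (a, a+h) with a ≥ 0, h > 0: (1/μ(R_h))∫_{R_h} w(x/2) dμ(x) · ((1/μ(R_h))∫_{R_h} w(x)^{-1/(p-1)} dμ(x))^{p-1} ≤ (2/(p+1)) · (1 - e^{-(p+1)h/2})/(1 - e^{-h}) · (h e^{-h/2}/(1 - e^{-h}))^{p-1}. -/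
open MeasureTheory Real

lemma aux_integral_exp_mul (c a b : ℝ) (hc : c ≠ 0) :
    ∫ x in a..b, Real.exp (c * x) = (Real.exp (c * b) - Real.exp (c * a)) / c := by
  rw [intervalIntegral.integral_comp_mul_left (fun x => Real.exp x) hc,
    integral_exp, smul_eq_mul]
  ring

/-- for `dμ = e^{|x|}dx`, `w(x) = e^{(p-1)|x|}`, `A = (1/2)`, and any interval
`R_h = (a, a+h)` with `a ≥ 0`, `h > 0`, the `A_{A,p}(μ)` product over `R_h` is bounded by
`(2/(p+1)) · (1 - e^{-(p+1)h/2})/(1 - e^{-h}) · (h e^{-h/2}/(1 - e^{-h}))^{p-1}`. -/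
theorem stmt11 (p : ℝ) (hp : 1 < p) (a h : ℝ) (ha : 0 ≤ a) (hh : 0 < h) :
    ((∫ x in a..(a + h), Real.exp |x|)⁻¹ *
        ∫ x in a..(a + h), Real.exp ((p - 1) * |x / 2|) * Real.exp |x|) *
      ((∫ x in a..(a + h), Real.exp |x|)⁻¹ *
        ∫ x in a..(a + h), (Real.exp ((p - 1) * |x|)) ^ (-(1 / (p - 1))) * Real.exp |x|)
          ^ (p - 1) ≤
      (2 / (p + 1)) * ((1 - Real.exp (-(p + 1) * h / 2)) / (1 - Real.exp (-h))) *
        (h * Real.exp (-h / 2) / (1 - Real.exp (-h))) ^ (p - 1) := by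
  have hq : (0:ℝ) < p - 1 := by linarith
  have hc : (0:ℝ) < (p + 1) / 2 := by linarith
  have hab : a ≤ a + h := by linarith
  have hI1 : ∫ x in a..(a + h), Real.exp |x| = Real.exp (a + h) - Real.exp a := by
    rw [intervalIntegral.integral_congr (g := fun x => Real.exp x) ?_, integral_exp]
    intro x hx
    rw [Set.uIcc_of_le hab] at hx
    simp [abs_of_nonneg (le_trans ha hx.1)]
  have hI2 : ∫ x in a..(a + h), Real.exp ((p - 1) * |x / 2|) * Real.exp |x|
      = (Real.exp ((p+1)/2 * (a+h)) - Real.exp ((p+1)/2 * a)) / ((p+1)/2) := by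
    rw [intervalIntegral.integral_congr (g := fun x => Real.exp ((p+1)/2 * x)) ?_,
      aux_integral_exp_mul _ _ _ (ne_of_gt hc)]
    intro x hx
    rw [Set.uIcc_of_le hab] at hx
    have hx0 : 0 ≤ x := le_trans ha hx.1
    simp only [abs_of_nonneg hx0, abs_of_nonneg (by linarith : (0:ℝ) ≤ x / 2),
      ← Real.exp_add]
    ring_nf
  have hI3 : ∫ x in a..(a + h), (Real.exp ((p - 1) * |x|)) ^ (-(1 / (p - 1))) * Real.exp |x|
      = h := by
    rw [intervalIntegral.integral_congr (g := fun _ => (1:ℝ)) ?_]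
    · simp
    intro x hx
    rw [Set.uIcc_of_le hab] at hx
    have hx0 : 0 ≤ x := le_trans ha hx.1
    simp only [abs_of_nonneg hx0]
    rw [← Real.exp_mul, ← Real.exp_add]
    rw [show (p-1) * x * -(1/(p-1)) + x = 0 by field_simp; ring]
    exact Real.exp_zero
  rw [hI1, hI2, hI3]
  set q := p - 1 with hqdef
  have hd : (0:ℝ) < 1 - Real.exp (-h) := by
    have : Real.exp (-h) < 1 := Real.exp_lt_one_iff.mpr (by linarith)
    linarith
  have hd2 : (0:ℝ) < 1 - Real.exp (-(p+1) * h / 2) := by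
    have : Real.exp (-(p+1) * h / 2) < 1 := Real.exp_lt_one_iff.mpr (by nlinarith)
    linarith
  have e1 : Real.exp (a+h) - Real.exp a = Real.exp (a+h) * (1 - Real.exp (-h)) := by
    rw [mul_sub, mul_one, ← Real.exp_add]; ring_nf
  have e2 : Real.exp ((p+1)/2*(a+h)) - Real.exp ((p+1)/2*a)
      = Real.exp ((p+1)/2*(a+h)) * (1 - Real.exp (-(p+1)*h/2)) := by
    rw [mul_sub, mul_one, ← Real.exp_add]; ring_nf
  have e3 : Real.exp ((p+1)/2*(a+h)) = Real.exp (q*(a+h)/2) * Real.exp (a+h) := by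
    rw [← Real.exp_add, hqdef]; ring_nf
  -- term 1 equality
  have hT1 : (Real.exp (a+h) - Real.exp a)⁻¹ *
      ((Real.exp ((p+1)/2*(a+h)) - Real.exp ((p+1)/2*a)) / ((p+1)/2))
      = (2/(p+1)) * ((1 - Real.exp (-(p+1)*h/2)) / (1 - Real.exp (-h)))
        * Real.exp (q*(a+h)/2) := by
    rw [e1, e2, e3]
    have h1 := Real.exp_pos (a+h)
    field_simp
  -- term 2 base equality
  have hT2 : (Real.exp (a+h) - Real.exp a)⁻¹ * h
      = (h * Real.exp (-h/2) / (1 - Real.exp (-h))) * Real.exp (-(a+h/2)) := by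
    rw [e1]
    have key2 : Real.exp (-h/2) * Real.exp (-(a+h/2)) = (Real.exp (a+h))⁻¹ := by
      rw [← Real.exp_add, ← Real.exp_neg]; ring_nf
    rw [div_mul_eq_mul_div, mul_assoc, key2, mul_inv]
    ring
  rw [hT1, hT2]
  have hK : (0:ℝ) < h * Real.exp (-h/2) / (1 - Real.exp (-h)) := by positivity
  rw [Real.mul_rpow hK.le (Real.exp_pos _).le, ← Real.exp_mul]
  have hfin : (2/(p+1)) * ((1 - Real.exp (-(p+1)*h/2)) / (1 - Real.exp (-h)))
        * Real.exp (q*(a+h)/2) *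
      ((h * Real.exp (-h/2) / (1 - Real.exp (-h))) ^ q * Real.exp (-(a+h/2) * q))
      = ((2/(p+1)) * ((1 - Real.exp (-(p+1)*h/2)) / (1 - Real.exp (-h)))
        * (h * Real.exp (-h/2) / (1 - Real.exp (-h))) ^ q)
        * Real.exp (q*(a+h)/2 + -(a+h/2) * q) := by
    rw [Real.exp_add]; ring
  rw [hfin]
  apply mul_le_of_le_one_right
  · apply mul_nonneg
    · apply mul_nonneg (by positivity) (div_nonneg hd2.le hd.le)
    · exact Real.rpow_nonneg hK.le q
  · rw [Real.exp_le_one_iff]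
    nlinarith
end

section
/- Let dμ = e^{|x|}dx on ℝ, 1 < p < ∞, and w(x) = e^{(p-1)|x|}. Then the supremum over intervals (a, a+h) with a ≥ 0, h > 0 of (1/μ(R_h))∫_{R_h} w dμ · ((1/μ(R_h))∫_{R_h} w^{-1/(p-1)} dμ)^{p-1} is infinite; in particular w is not an A_p(μ) weight. -/
open MeasureTheory Real

lemma int1 (h : ℝ) (hh : 0 < h) :
    ∫ x in (0:ℝ)..h, Real.exp |x| = Real.exp h - 1 := by
  rw [intervalIntegral.integral_congr (g := fun x => Real.exp x)
    (by intro x hx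
        rw [Set.uIcc_of_le hh.le] at hx
        simp [abs_of_nonneg hx.1]),
    integral_exp, Real.exp_zero]

lemma int2 (p h : ℝ) (hp : 1 < p) (hh : 0 < h) :
    ∫ x in (0:ℝ)..h, Real.exp ((p - 1) * |x|) * Real.exp |x|
      = (Real.exp (p * h) - 1) / p := by
  have hp0 : p ≠ 0 := by linarith
  rw [intervalIntegral.integral_congr (g := fun x => Real.exp (p * x))
    (by intro x hx
        rw [Set.uIcc_of_le hh.le] at hx
        show Real.exp ((p - 1) * |x|) * Real.exp |x| = Real.exp (p * x)
        rw [abs_of_nonneg hx.1, ← Real.exp_add]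
        ring_nf)]
  rw [intervalIntegral.integral_comp_mul_left (fun x => Real.exp x) hp0]
  rw [integral_exp, mul_zero, Real.exp_zero, smul_eq_mul]
  ring

lemma int3 (p h : ℝ) (hp : 1 < p) (hh : 0 < h) :
    ∫ x in (0:ℝ)..h, (Real.exp ((p - 1) * |x|)) ^ (-(1 / (p - 1))) * Real.exp |x| = h := by
  have hq : p - 1 ≠ 0 := by linarith
  rw [intervalIntegral.integral_congr (g := fun _ => (1:ℝ))
    (by intro x hx
        rw [Set.uIcc_of_le hh.le] at hx
        show Real.exp ((p - 1) * |x|) ^ (-(1 / (p - 1))) * Real.exp |x| = 1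
        rw [abs_of_nonneg hx.1, ← Real.exp_mul, ← Real.exp_add]
        rw [show (p - 1) * x * -(1 / (p - 1)) + x = x * (1 - (p-1) * (1/(p-1))) by ring,
          mul_one_div, div_self hq]
        simp)]
  simp


/-- for `dμ = e^{|x|}dx` and `w(x) = e^{(p-1)|x|}`, the `A_p(μ)` supremum over
intervals `(a, a+h)` with `a ≥ 0`, `h > 0` is infinite; in particular `w ∉ A_p(μ)`. -/
theorem stmt13 (p : ℝ) (hp : 1 < p) :
    ∀ C : ℝ, ∃ a h : ℝ, 0 ≤ a ∧ 0 < h ∧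
      C < ((∫ x in a..(a + h), Real.exp |x|)⁻¹ *
            ∫ x in a..(a + h), Real.exp ((p - 1) * |x|) * Real.exp |x|) *
          ((∫ x in a..(a + h), Real.exp |x|)⁻¹ *
            ∫ x in a..(a + h), (Real.exp ((p - 1) * |x|)) ^ (-(1 / (p - 1))) * Real.exp |x|)
              ^ (p - 1) := by
  intro C
  have hq : 0 < p - 1 := by linarith
  set M : ℝ := max C 0 with hM
  set K : ℝ := (2 * p * (M + 1)) ^ (1 / (p - 1)) with hKdef
  have hMpos : 0 < 2 * p * (M + 1) := by
    have : 0 ≤ M := le_max_right _ _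
    nlinarith
  have hK0 : 0 ≤ K := Real.rpow_nonneg hMpos.le _
  set h : ℝ := max 1 K with hhdef
  have hh1 : 1 ≤ h := le_max_left _ _
  have hh : 0 < h := by linarith
  have hKp : K ^ (p - 1) = 2 * p * (M + 1) := by
    rw [hKdef, ← Real.rpow_mul hMpos.le, one_div, inv_mul_cancel₀ hq.ne', Real.rpow_one]
  have hhp : 2 * p * (M + 1) ≤ h ^ (p - 1) := by
    rw [← hKp]
    exact Real.rpow_le_rpow hK0 (le_max_right _ _) hq.le
  refine ⟨0, h, le_refl 0, hh, ?_⟩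
  rw [zero_add, int1 h hh, int2 p h hp hh, int3 p h hp hh]
  set A : ℝ := Real.exp h - 1 with hAdef
  have hA : 0 < A := by
    have := Real.exp_lt_exp.mpr hh
    rw [Real.exp_zero] at this
    linarith
  have hALe : A ≤ Real.exp h := by
    rw [hAdef]; linarith [Real.exp_pos h]
  have e1 : A ^ (p - 1) * A = A ^ p := by
    rw [← Real.rpow_add_one hA.ne']
    norm_num
  have hAp : A ^ p ≤ Real.exp (p * h) := by
    calc A ^ p ≤ (Real.exp h) ^ p := Real.rpow_le_rpow hA.le hALe (by linarith)
    _ = Real.exp (h * p) := (Real.exp_mul h p).symm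
    _ = Real.exp (p * h) := by rw [mul_comm]
  have hexp2 : (2:ℝ) ≤ Real.exp (p * h) := by
    have h1 : (1:ℝ) ≤ p * h := by nlinarith
    have := Real.exp_le_exp.mpr h1
    have e2 := Real.exp_one_gt_d9
    linarith
  have hB : Real.exp (p * h) / 2 ≤ Real.exp (p * h) - 1 := by linarith
  have hEq : A⁻¹ * ((Real.exp (p * h) - 1) / p) * (A⁻¹ * h) ^ (p - 1)
      = (Real.exp (p * h) - 1) * h ^ (p - 1) / (p * A ^ p) := by
    rw [inv_mul_eq_div A h, Real.div_rpow hh.le hA.le, ← e1]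
    have h1 : A ^ (p - 1) ≠ 0 := (Real.rpow_pos_of_pos hA _).ne'
    have h3 : p ≠ 0 := by linarith
    field_simp
  rw [hEq]
  have hrp : (0:ℝ) ≤ h ^ (p - 1) := Real.rpow_nonneg hh.le _
  have key : h ^ (p - 1) / (2 * p) ≤ (Real.exp (p * h) - 1) * h ^ (p - 1) / (p * A ^ p) := by
    have step : (Real.exp (p * h) / 2 * h ^ (p - 1)) / (p * Real.exp (p * h))
        ≤ (Real.exp (p * h) - 1) * h ^ (p - 1) / (p * A ^ p) := by
      apply div_le_div₀ (mul_nonneg (by linarith) hrp)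
        (mul_le_mul_of_nonneg_right hB hrp)
        (by positivity)
        (by nlinarith [Real.rpow_pos_of_pos hA p])
    have eq2 : (Real.exp (p * h) / 2 * h ^ (p - 1)) / (p * Real.exp (p * h))
        = h ^ (p - 1) / (2 * p) := by
      have := (Real.exp_pos (p * h)).ne'
      field_simp
    linarith [step, eq2 ▸ step]
  have hC : C < h ^ (p - 1) / (2 * p) := by
    have hm1 : M + 1 ≤ h ^ (p - 1) / (2 * p) := by
      rw [le_div_iff₀ (by positivity)]
      nlinarith
    have : C ≤ M := le_max_left _ _
    linarith
  linarith
end
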